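/- Soft-thresholding solves the ℓ∞-adversarially regularized linear problem: for μ̂ ∈ ℝ^p and ε > 0, define the thresholding operator T_ε(μ̂) ∈ ℝ^p coordinatewise by (T_ε(μ̂))_j = sign(μ̂_j)·max{|μ̂_j| − ε, 0}. If T_ε(μ̂) ≠ 0, then the maximum over β ∈ ℝ^p with ‖β‖₂ = 1 of Σ_{j=1}^p (μ̂_j·β_j − ε·|β_j|) equals ‖T_ε(μ̂)‖₂ and is attained at β = T_ε(μ̂)/‖T_ε(μ̂)‖₂. -/
import Mathlib


/-!
STATEMENT 12: Soft-thresholding solves the ℓ∞-adversarially regularized linear problem: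
for `μ̂ ∈ ℝ^p`, `ε > 0`, define `(T_ε(μ̂))_j = sign(μ̂_j)·max{|μ̂_j| − ε, 0}`.
If `T_ε(μ̂) ≠ 0`, then `max_{‖β‖₂ = 1} ∑_j (μ̂_j β_j − ε|β_j|) = ‖T_ε(μ̂)‖₂`, attained at
`β = T_ε(μ̂)/‖T_ε(μ̂)‖₂`.
-/

noncomputable section

open scoped BigOperators

/-- Euclidean norm on `ℝ^p`. -/
def nrm {p : ℕ} (v : Fin p → ℝ) : ℝ := Real.sqrt (∑ i, v i ^ 2)

/-- The (soft-)thresholding operator `(T_ε(μ̂))_j = sign(μ̂_j)·max{|μ̂_j| − ε, 0}`. -/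
def softThreshold {p : ℕ} (ε : ℝ) (muh : Fin p → ℝ) : Fin p → ℝ :=
  fun j => Real.sign (muh j) * max (|muh j| - ε) 0

lemma mul_sign_eq_abs (x : ℝ) : x * Real.sign x = |x| := by
  rcases lt_trichotomy x 0 with h|h|h
  · rw [Real.sign_of_neg h, abs_of_neg h]; ring
  · simp [h]
  · rw [Real.sign_of_pos h, abs_of_pos h]; ring

lemma nrm_smul {p : ℕ} (c : ℝ) (v : Fin p → ℝ) : nrm (c • v) = |c| * nrm v := by
  simp only [nrm, Pi.smul_apply, smul_eq_mul, mul_pow]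
  rw [← Finset.mul_sum, Real.sqrt_mul (sq_nonneg c), Real.sqrt_sq_eq_abs]

theorem soft_thresholding_solves_linfty_problem {p : ℕ} (muh : Fin p → ℝ) (ε : ℝ)
    (hε : 0 < ε) (hT : softThreshold ε muh ≠ 0) :
    (nrm ((nrm (softThreshold ε muh))⁻¹ • softThreshold ε muh) = 1 ∧
      ∑ j, (muh j * ((nrm (softThreshold ε muh))⁻¹ • softThreshold ε muh) j -
          ε * |((nrm (softThreshold ε muh))⁻¹ • softThreshold ε muh) j|) =
        nrm (softThreshold ε muh)) ∧
    ∀ β : Fin p → ℝ, nrm β = 1 →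
      ∑ j, (muh j * β j - ε * |β j|) ≤ nrm (softThreshold ε muh) := by
  classical
  set T := softThreshold ε muh with hTdef
  have habs : ∀ j, |T j| = max (|muh j| - ε) 0 := by
    intro j
    have hmx : (0:ℝ) ≤ max (|muh j| - ε) 0 := le_max_right _ _
    by_cases h : muh j = 0
    · have : T j = 0 := by simp [hTdef, softThreshold, h]
      rw [this, abs_zero, h, abs_zero, max_eq_right (by linarith : (0:ℝ) - ε ≤ 0)]
    · have : |T j| = |Real.sign (muh j)| * max (|muh j| - ε) 0 := by
        rw [hTdef]; simp only [softThreshold]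
        rw [abs_mul, abs_of_nonneg hmx]
      rw [this]
      rcases lt_or_gt_of_ne h with hn|hp
      · rw [Real.sign_of_neg hn]; norm_num
      · rw [Real.sign_of_pos hp]; norm_num
  have hterm : ∀ j, muh j * T j - ε * |T j| = T j ^ 2 := by
    intro j
    have h1 : muh j * T j = |muh j| * max (|muh j| - ε) 0 := by
      show muh j * (Real.sign (muh j) * _) = _
      rw [← mul_assoc, mul_sign_eq_abs]
    have h2 : T j ^ 2 = (max (|muh j| - ε) 0) ^ 2 := by rw [← sq_abs, habs j]
    rw [h1, habs j, h2]
    rcases le_total (|muh j| - ε) 0 with h|h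
    · rw [max_eq_right h]; ring
    · rw [max_eq_left h]; ring
  have hNpos : 0 < nrm T := by
    obtain ⟨j, hj⟩ : ∃ j, T j ≠ 0 := Function.ne_iff.mp hT
    apply Real.sqrt_pos.mpr
    exact lt_of_lt_of_le (by positivity : (0:ℝ) < T j ^ 2)
      (Finset.single_le_sum (f := fun i => T i ^ 2) (fun i _ => sq_nonneg _)
        (Finset.mem_univ j))
  have hsumT : ∑ j, (muh j * T j - ε * |T j|) = nrm T ^ 2 := by
    rw [Finset.sum_congr rfl (fun j _ => hterm j), nrm, Real.sq_sqrt (by positivity)]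
  set N := nrm T with hN
  have hNinv : (0:ℝ) ≤ N⁻¹ := inv_nonneg.mpr hNpos.le
  refine ⟨⟨?_, ?_⟩, ?_⟩
  · rw [nrm_smul, abs_of_nonneg hNinv, inv_mul_cancel₀ hNpos.ne']
  · have : ∀ j, muh j * (N⁻¹ • T) j - ε * |(N⁻¹ • T) j| =
        N⁻¹ * (muh j * T j - ε * |T j|) := by
      intro j
      simp only [Pi.smul_apply, smul_eq_mul, abs_mul, abs_of_nonneg hNinv]
      ring
    rw [Finset.sum_congr rfl (fun j _ => this j), ← Finset.mul_sum, hsumT]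
    rw [sq]
    field_simp
  · intro β hβ
    have hbd : ∀ j, muh j * β j - ε * |β j| ≤ |T j| * |β j| := by
      intro j
      have h1 : muh j * β j ≤ |muh j| * |β j| := by
        calc muh j * β j ≤ |muh j * β j| := le_abs_self _
        _ = |muh j| * |β j| := abs_mul _ _
      have h2 : (|muh j| - ε) * |β j| ≤ max (|muh j| - ε) 0 * |β j| :=
        mul_le_mul_of_nonneg_right (le_max_left _ _) (abs_nonneg _)
      rw [habs j]
      nlinarith [abs_nonneg (β j)]
    calc ∑ j, (muh j * β j - ε * |β j|) ≤ ∑ j, |T j| * |β j| :=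
          Finset.sum_le_sum fun j _ => hbd j
      _ ≤ N := by
          have hS : (0:ℝ) ≤ ∑ j, |T j| * |β j| :=
            Finset.sum_nonneg fun j _ => mul_nonneg (abs_nonneg _) (abs_nonneg _)
          have hcs := Finset.sum_mul_sq_le_sq_mul_sq Finset.univ
            (fun j => |T j|) (fun j => |β j|)
          simp only [sq_abs] at hcs
          have := Real.sqrt_le_sqrt hcs
          rw [Real.sqrt_sq hS, Real.sqrt_mul (by positivity)] at this
          calc (∑ j, |T j| * |β j|) ≤ Real.sqrt (∑ i, T i ^ 2) * Real.sqrt (∑ i, β i ^ 2) := this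
            _ = N * nrm β := rfl
            _ = N := by rw [hβ, mul_one]
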